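/- Let m ≥ 2 be an integer, a an integer with gcd(a, m) = 1, and let n = ord_m(a) be the multiplicative order of a modulo m. Then C_m(a) ≡ (λ(m)/n) · Σ_{r=1, r ∈ ⟨a⟩}^{m} (a·r)⁻¹ · ⌊a·r/m⌋ (mod m), where the sum is over integers r with 1 ≤ r ≤ m whose residue class lies in the subgroup ⟨a⟩ of (ℤ/mℤ)* generated by a, (a·r)⁻¹ denotes a multiplicative inverse of a·r modulo m, and λ(m)/n is an integer since n divides λ(m). -/

import Mathlib

/-!
Let `S` be the set of `r ∈ [1, m]` whose residues form `⟨a⟩`, so `|S| = n`. Write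
`a r = x_r + m y_r` with `x_r = a r mod m` and `y_r = ⌊a r / m⌋`. Multiplication by `a` permutes
`⟨a⟩`, so `r ↦ x_r` permutes `S` and `∏ x_r = ∏ r`. Modulo `m²`, where `m · m = 0`,
`a^n ∏ r = ∏ x_r (1 + m y_r x_r⁻¹) = ∏ r · (1 + m Σ y_r x_r⁻¹)`, hence
`a^n ≡ 1 + m Σ y_r x_r⁻¹` and
`a^{λ(m)} = (a^n)^{λ(m)/n} ≡ 1 + (λ(m)/n) m Σ y_r x_r⁻¹ (mod m²)`.
Dividing `a^{λ(m)} - 1 = m C_m(a)` by `m` gives the claim modulo `m`.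
-/

/-- The Carmichael function `λ(m)`: the smallest positive integer `n` such that
`a ^ n ≡ 1 (mod m)` for every integer `a` coprime to `m`. -/
noncomputable def carmichael (m : ℕ) : ℕ :=
  sInf {n : ℕ | 0 < n ∧ ∀ a : ℤ, Int.gcd a m = 1 → a ^ n ≡ 1 [ZMOD (m : ℤ)]}

/-- The Carmichael quotient `C_m(a) = (a^{λ(m)} - 1) / m`. -/
noncomputable def carQuot (m : ℕ) (a : ℤ) : ℤ := (a ^ carmichael m - 1) / m

open Finset

section SquareZero

variable {R : Type*} [CommRing R] {c : R}

theorem prod_one_add_mul_of_mul_self_eq_zero (hc : c * c = 0) {ι : Type*} (s : Finset ι)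
    (z : ι → R) : ∏ i ∈ s, (1 + c * z i) = 1 + c * ∑ i ∈ s, z i := by
  classical
  induction s using Finset.induction_on with
  | empty => simp
  | insert i s hi ih =>
    rw [prod_insert hi, sum_insert hi, ih]
    linear_combination (z i * ∑ j ∈ s, z j) * hc

theorem one_add_mul_pow_of_mul_self_eq_zero (hc : c * c = 0) (z : R) (k : ℕ) :
    (1 + c * z) ^ k = 1 + k * (c * z) := by
  simpa [mul_left_comm] using prod_one_add_mul_of_mul_self_eq_zero hc (range k) fun _ ↦ z

end SquareZero

namespace ZMod

theorem natCast_mul_self_eq_zero (m : ℕ) : (m : ZMod (m ^ 2)) * m = 0 := by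
  rw [← Nat.cast_mul, ← sq, natCast_self]

theorem castHom_eq_of_natCast_mul_eq {m : ℕ} (hm : m ≠ 0) {x y : ZMod (m ^ 2)}
    (h : (m : ZMod (m ^ 2)) * x = (m : ZMod (m ^ 2)) * y) :
    castHom (dvd_pow_self m two_ne_zero) (ZMod m) x =
      castHom (dvd_pow_self m two_ne_zero) (ZMod m) y := by
  rw [← intCast_zmod_cast x, ← intCast_zmod_cast y, map_intCast, map_intCast,
    intCast_eq_intCast_iff]
  refine Int.ModEq.mul_left_cancel' (c := m) (by exact_mod_cast hm) ?_
  rw [← sq, ← Nat.cast_pow, ← intCast_eq_intCast_iff]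
  push_cast
  exact h

theorem isUnit_intCast_sq_of_isUnit {m : ℕ} {k : ℤ} (hk : IsUnit (k : ZMod m)) :
    IsUnit (k : ZMod (m ^ 2)) := by
  rw [coe_int_isUnit_iff_isCoprime] at hk ⊢
  push_cast
  exact hk.pow_left

theorem castHom_inv_of_isUnit {m : ℕ} {x : ZMod (m ^ 2)} (hx : IsUnit x) :
    castHom (dvd_pow_self m two_ne_zero) (ZMod m) x⁻¹ =
      (castHom (dvd_pow_self m two_ne_zero) (ZMod m) x)⁻¹ := by
  refine (ZMod.inv_eq_of_mul_eq_one _ _ _ ?_).symm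
  rw [← map_mul, mul_inv_of_unit x hx, map_one]

end ZMod

theorem isUnit_intCast_of_gcd_eq_one {m : ℕ} {a : ℤ} (ha : Int.gcd a m = 1) :
    IsUnit (a : ZMod m) :=
  (ZMod.coe_int_isUnit_iff_isCoprime a m).2 (Int.isCoprime_iff_gcd_eq_one.2 (by rwa [Int.gcd_comm]))

theorem pow_carmichael_modEq_one {m : ℕ} (hm : 0 < m) {a : ℤ} (ha : Int.gcd a m = 1) :
    a ^ carmichael m ≡ 1 [ZMOD m] := by
  have : NeZero m := ⟨hm.ne'⟩
  suffices ∀ b : ℤ, Int.gcd b m = 1 → b ^ m.totient ≡ 1 [ZMOD m] from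
    (Nat.sInf_mem (s := {n | 0 < n ∧ ∀ b : ℤ, Int.gcd b m = 1 → b ^ n ≡ 1 [ZMOD m]})
      ⟨m.totient, Nat.totient_pos.2 hm, this⟩).2 a ha
  intro b hb
  obtain ⟨u, hu⟩ := isUnit_intCast_of_gcd_eq_one hb
  rw [← ZMod.intCast_eq_intCast_iff]
  push_cast
  rw [← hu, ← Units.val_pow_eq_pow_val, ZMod.pow_totient, Units.val_one]

theorem natCast_mul_carQuot {m : ℕ} (hm : 0 < m) {a : ℤ} (ha : Int.gcd a m = 1) :
    (m : ℤ) * carQuot m a = a ^ carmichael m - 1 :=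
  Int.mul_ediv_cancel' (pow_carmichael_modEq_one hm ha).symm.dvd

theorem orderOf_dvd_carmichael {m : ℕ} (hm : 0 < m) {a : ℤ} (ha : Int.gcd a m = 1) :
    orderOf (a : ZMod m) ∣ carmichael m := by
  refine orderOf_dvd_of_pow_eq_one ?_
  have := (ZMod.intCast_eq_intCast_iff _ _ _).2 (pow_carmichael_modEq_one hm ha)
  push_cast at this
  exact this

open scoped Classical in
noncomputable def powersReps (m : ℕ) (A : ZMod m) : Finset ℕ :=
  (Icc 1 m).filter (fun r : ℕ ↦ ∃ j : ℕ, (r : ZMod m) = A ^ j)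

section Orbit

variable {m : ℕ} [Fact (1 < m)] (u : (ZMod m)ˣ)

@[simps]
def zpowersValEmbedding : Subgroup.zpowers u ↪ ℕ :=
  ⟨fun h ↦ ((h : (ZMod m)ˣ) : ZMod m).val,
    fun _ _ e ↦ Subtype.ext (Units.ext (ZMod.val_injective m e))⟩

theorem powersReps_eq_map : powersReps m u = univ.map (zpowersValEmbedding u) := by
  refine Finset.ext fun r ↦ ?_
  simp only [powersReps, mem_filter, mem_Icc, mem_map, mem_univ, true_and, Subtype.exists,
    zpowersValEmbedding_apply, ← mem_powers_iff_mem_zpowers, Submonoid.mem_powers_iff,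
    exists_prop, exists_exists_eq_and, ← Units.val_pow_eq_pow_val]
  constructor
  · rintro ⟨⟨hr1, hrm⟩, j, hj⟩
    have hr : r < m := by
      refine lt_of_le_of_ne hrm ?_
      rintro rfl
      exact (u ^ j).ne_zero (by rw [← hj, ZMod.natCast_self])
    exact ⟨j, by rw [← hj, ZMod.val_cast_of_lt hr]⟩
  · rintro ⟨j, rfl⟩
    refine ⟨⟨Nat.one_le_iff_ne_zero.2 ?_, (ZMod.val_lt _).le⟩, j, ZMod.natCast_zmod_val _⟩
    rw [Ne, ZMod.val_eq_zero]
    exact (u ^ j).ne_zero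

theorem card_powersReps : #(powersReps m u) = orderOf u := by
  rw [powersReps_eq_map, card_map, card_univ, Fintype.card_zpowers]

theorem prod_powersReps_val_mul :
    ∏ r ∈ powersReps m u, ((u : ZMod m) * r).val = ∏ r ∈ powersReps m u, r := by
  rw [powersReps_eq_map, prod_map, prod_map]
  simp only [zpowersValEmbedding_apply, ZMod.natCast_zmod_val]
  exact Fintype.prod_equiv (Equiv.mulLeft ⟨u, Subgroup.mem_zpowers u⟩) _ _ fun _ ↦ rfl

end Orbit

theorem isUnit_of_mem_powersReps {m : ℕ} {A : ZMod m} (hA : IsUnit A) {r : ℕ}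
    (hr : r ∈ powersReps m A) : IsUnit (r : ZMod m) := by
  simp only [powersReps, mem_filter] at hr
  obtain ⟨-, j, hj⟩ := hr
  exact hj ▸ hA.pow j

theorem isUnit_intCast_mul_emod_sq {m : ℕ} {a : ℤ} (u : (ZMod m)ˣ) (hu : (u : ZMod m) = a)
    {r : ℕ} (hr : r ∈ powersReps m u) : IsUnit ((a * r % m : ℤ) : ZMod (m ^ 2)) := by
  refine ZMod.isUnit_intCast_sq_of_isUnit ?_
  rw [ZMod.intCast_mod]
  push_cast
  exact hu ▸ u.isUnit.mul (isUnit_of_mem_powersReps u.isUnit hr)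

section

variable {m : ℕ} [Fact (1 < m)]

theorem intCast_pow_orderOf_eq_one_add (a : ℤ) (u : (ZMod m)ˣ) (hu : (u : ZMod m) = a) :
    (a : ZMod (m ^ 2)) ^ orderOf u = 1 + m * ∑ r ∈ powersReps m u,
      ((a * r / m : ℤ) : ZMod (m ^ 2)) * ((a * r % m : ℤ) : ZMod (m ^ 2))⁻¹ := by
  set S := powersReps m u
  set x : ℕ → ZMod (m ^ 2) := fun r ↦ ((a * r % m : ℤ) : ZMod (m ^ 2))
  set y : ℕ → ZMod (m ^ 2) := fun r ↦ ((a * r / m : ℤ) : ZMod (m ^ 2))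
  have hx_val (r : ℕ) : x r = (((u : ZMod m) * r).val : ZMod (m ^ 2)) := by
    simp only [x, hu]
    rw [← ZMod.val_intCast]
    push_cast
    rfl
  have hx_unit (r : ℕ) (hr : r ∈ S) : IsUnit (x r) := isUnit_intCast_mul_emod_sq u hu hr
  have hprod : ∏ r ∈ S, x r = ∏ r ∈ S, (r : ZMod (m ^ 2)) := by
    have := congrArg (Nat.cast : ℕ → ZMod (m ^ 2)) (prod_powersReps_val_mul u)
    push_cast at this
    simpa only [hx_val] using this
  have hP : IsUnit (∏ r ∈ S, (r : ZMod (m ^ 2))) := hprod ▸ IsUnit.prod_iff.2 hx_unit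
  refine hP.mul_right_cancel ?_
  calc (a : ZMod (m ^ 2)) ^ orderOf u * ∏ r ∈ S, (r : ZMod (m ^ 2))
      = ∏ r ∈ S, (a : ZMod (m ^ 2)) * r := by
        rw [prod_mul_distrib, prod_const, card_powersReps]
    _ = ∏ r ∈ S, (x r + m * y r) := prod_congr rfl fun r _ ↦ by
        simp only [x, y]
        exact_mod_cast
          congrArg (Int.cast : ℤ → ZMod (m ^ 2)) (Int.emod_add_mul_ediv (a * r) m).symm
    _ = ∏ r ∈ S, x r * (1 + m * (y r * (x r)⁻¹)) := prod_congr rfl fun r hr ↦ by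
        linear_combination (-(m * y r)) * ZMod.mul_inv_of_unit _ (hx_unit r hr)
    _ = (1 + m * ∑ r ∈ S, y r * (x r)⁻¹) * ∏ r ∈ S, (r : ZMod (m ^ 2)) := by
        rw [prod_mul_distrib, hprod,
          prod_one_add_mul_of_mul_self_eq_zero (ZMod.natCast_mul_self_eq_zero m), mul_comm]

end

open scoped Classical in
/-- Lerch's expression for the Carmichael quotient: with `n = ord_m a`,
`C_m(a) ≡ (λ(m)/n) · Σ_{r=1, r ∈ ⟨a⟩}^{m} (a·r)⁻¹ · ⌊a·r/m⌋ (mod m)`,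
stated as an equality in `ZMod m` (where the inverse is the multiplicative
inverse of `a·r` modulo `m`). -/
theorem stmt8 (m : ℕ) (hm : 2 ≤ m) (a : ℤ) (ha : Int.gcd a m = 1)
    (n : ℕ) (hn : n = orderOf ((a : ZMod m))) :
    ((carQuot m a : ℤ) : ZMod m) =
      ((carmichael m / n : ℕ) : ZMod m) *
        ∑ r ∈ (Finset.Icc 1 m).filter
            (fun r => ∃ j : ℕ, ((r : ℕ) : ZMod m) = (a : ZMod m) ^ j),
          (((a * (r : ℤ) : ℤ)) : ZMod m)⁻¹ * (((a * (r : ℤ)).fdiv m : ℤ) : ZMod m) := by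
  have : Fact (1 < m) := ⟨hm⟩
  obtain ⟨u, hu⟩ := isUnit_intCast_of_gcd_eq_one ha
  have hn : n = orderOf u := by rw [hn, ← hu, orderOf_units]
  subst hn
  have hdvd : orderOf u ∣ carmichael m := by
    rw [← orderOf_units, hu]
    exact orderOf_dvd_carmichael (by omega) ha
  have hC := congrArg (Int.cast : ℤ → ZMod (m ^ 2)) (natCast_mul_carQuot (by omega) ha)
  push_cast at hC
  rw [← Nat.mul_div_cancel' hdvd, pow_mul, intCast_pow_orderOf_eq_one_add a u hu,
    one_add_mul_pow_of_mul_self_eq_zero (ZMod.natCast_mul_self_eq_zero m), add_sub_cancel_left,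
    mul_left_comm] at hC
  have hC' := ZMod.castHom_eq_of_natCast_mul_eq (by omega) hC
  simp only [map_intCast, map_mul, map_natCast, map_sum] at hC'
  rw [hC', ← hu]
  refine congrArg _ (sum_congr rfl fun r hr ↦ ?_)
  rw [ZMod.castHom_inv_of_isUnit (isUnit_intCast_mul_emod_sq u hu hr), map_intCast,
    ZMod.intCast_mod, Int.fdiv_eq_ediv_of_nonneg _ (Int.natCast_nonneg m), mul_comm]
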